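/- Let (β_k) be a strictly positive null sequence of reals and T : c₀ → c₀ given by T a = Σ_k β_k a_k e_k. Then T is completely quasi Levi but not σ-Levi. -/

import Mathlib

/-- Order convergence of a net. -/
def OConvNet {ι F : Type*} [Preorder ι] [Lattice F] [AddCommGroup F]
    (x : ι → F) (x₀ : F) : Prop :=
  ∃ D : Set F, D.Nonempty ∧ DirectedOn (· ≥ ·) D ∧ IsGLB D 0 ∧
    ∀ y ∈ D, ∃ α₀, ∀ α, α₀ ≤ α → |x α - x₀| ≤ y

/-- Order convergence of a sequence. -/
def OConvSeq {F : Type*} [Lattice F] [AddCommGroup F] (x : ℕ → F) (x₀ : F) : Prop :=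
  ∃ y : ℕ → F, Antitone y ∧ IsGLB (Set.range y) 0 ∧
    ∀ m, ∃ n₀, ∀ n, n₀ ≤ n → |x n - x₀| ≤ y m

/-- A net is order-Cauchy if its double net of differences order converges to `0`. -/
def OCauchyNet {ι F : Type*} [Preorder ι] [Lattice F] [AddCommGroup F]
    (x : ι → F) : Prop :=
  OConvNet (fun p : ι × ι => x p.1 - x p.2) (0 : F)

/-- A sequence is order-Cauchy if its double sequence of differences order converges to `0`. -/
def OCauchySeq' {F : Type*} [Lattice F] [AddCommGroup F] (x : ℕ → F) : Prop :=
  OConvNet (fun p : ℕ × ℕ => x p.1 - x p.2) (0 : F)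

section Maps
variable {E F : Type*} [Lattice E] [AddCommGroup E] [Norm E] [Lattice F] [AddCommGroup F]

def IsLeviMap (T : E → F) : Prop :=
  ∀ (ι : Type) [Nonempty ι] [Preorder ι] [IsDirected ι (· ≤ ·)],
    ∀ x : ι → E, Monotone x → (∃ C, ∀ α, ‖x α‖ ≤ C) →
      ∃ x₀ : E, OConvNet (fun α => T (x α)) (T x₀)

def IsSigmaLeviMap (T : E → F) : Prop :=
  ∀ x : ℕ → E, Monotone x → (∃ C, ∀ n, ‖x n‖ ≤ C) →
    ∃ x₀ : E, OConvSeq (fun n => T (x n)) (T x₀)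

def IsCqLeviMap (T : E → F) : Prop :=
  ∀ (ι : Type) [Nonempty ι] [Preorder ι] [IsDirected ι (· ≤ ·)],
    ∀ x : ι → E, Monotone x → (∃ C, ∀ α, ‖x α‖ ≤ C) →
      ∃ y₀ : F, OConvNet (fun α => T (x α)) y₀

def IsCqSigmaLeviMap (T : E → F) : Prop :=
  ∀ x : ℕ → E, Monotone x → (∃ C, ∀ n, ‖x n‖ ≤ C) →
    ∃ y₀ : F, OConvSeq (fun n => T (x n)) y₀

def IsQLeviMap (T : E → F) : Prop :=
  ∀ (ι : Type) [Nonempty ι] [Preorder ι] [IsDirected ι (· ≤ ·)],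
    ∀ x : ι → E, Monotone x → (∃ C, ∀ α, ‖x α‖ ≤ C) →
      OCauchyNet (fun α => T (x α))

def IsQSigmaLeviMap (T : E → F) : Prop :=
  ∀ x : ℕ → E, Monotone x → (∃ C, ∀ n, ‖x n‖ ≤ C) →
    OCauchySeq' (fun n => T (x n))

end Maps

open Filter Topology

/-- The subspace `c` of convergent real sequences. -/
def cSub : Submodule ℝ (ℕ → ℝ) where
  carrier := {x | ∃ l : ℝ, Tendsto x atTop (nhds l)}
  add_mem' := by rintro x y ⟨l, hl⟩ ⟨m, hm⟩; exact ⟨l + m, hl.add hm⟩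
  zero_mem' := ⟨0, tendsto_const_nhds⟩
  smul_mem' := by rintro c x ⟨l, hl⟩; exact ⟨c * l, hl.const_mul c⟩

/-- The subspace `c₀` of real null sequences. -/
def c0Sub : Submodule ℝ (ℕ → ℝ) where
  carrier := {x | Tendsto x atTop (nhds 0)}
  add_mem' := by
    intro x y hx hy; show Tendsto (fun i => x i + y i) atTop (nhds 0); simpa using hx.add hy
  zero_mem' := tendsto_const_nhds
  smul_mem' := by
    intro c x hx; show Tendsto (fun i => c * x i) atTop (nhds 0); simpa using hx.const_mul c

/-- The subspace `ℓ^∞` of bounded real sequences. -/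
def LinfSub : Submodule ℝ (ℕ → ℝ) where
  carrier := {x | ∃ C : ℝ, ∀ n, |x n| ≤ C}
  add_mem' := by
    rintro x y ⟨C, hC⟩ ⟨D, hD⟩
    exact ⟨C + D, fun n => (abs_add_le _ _).trans (add_le_add (hC n) (hD n))⟩
  zero_mem' := ⟨0, fun n => by simp⟩
  smul_mem' := by
    rintro c x ⟨C, hC⟩
    exact ⟨|c| * C, fun n => by
      simpa [abs_mul] using mul_le_mul_of_nonneg_left (hC n) (abs_nonneg c)⟩

instance : Lattice cSub :=
  { (inferInstance : PartialOrder cSub) with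
    sup := fun x y => ⟨x.1 ⊔ y.1, by
      obtain ⟨l, hl⟩ := x.2; obtain ⟨m, hm⟩ := y.2; exact ⟨l ⊔ m, hl.max hm⟩⟩
    inf := fun x y => ⟨x.1 ⊓ y.1, by
      obtain ⟨l, hl⟩ := x.2; obtain ⟨m, hm⟩ := y.2; exact ⟨l ⊓ m, hl.min hm⟩⟩
    le_sup_left := fun a b => (le_sup_left : a.1 ≤ a.1 ⊔ b.1)
    le_sup_right := fun a b => (le_sup_right : b.1 ≤ a.1 ⊔ b.1)
    sup_le := fun a b c h₁ h₂ => (sup_le h₁ h₂ : a.1 ⊔ b.1 ≤ c.1)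
    inf_le_left := fun a b => (inf_le_left : a.1 ⊓ b.1 ≤ a.1)
    inf_le_right := fun a b => (inf_le_right : a.1 ⊓ b.1 ≤ b.1)
    le_inf := fun a b c h₁ h₂ => (le_inf h₁ h₂ : a.1 ≤ b.1 ⊓ c.1) }

instance : Lattice c0Sub :=
  { (inferInstance : PartialOrder c0Sub) with
    sup := fun x y => ⟨x.1 ⊔ y.1, by
      have := x.2.max y.2
      show Tendsto (fun b => x.1 b ⊔ y.1 b) atTop (nhds 0)
      first | exact this | simpa using this⟩
    inf := fun x y => ⟨x.1 ⊓ y.1, by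
      have := x.2.min y.2
      show Tendsto (fun b => x.1 b ⊓ y.1 b) atTop (nhds 0)
      first | exact this | simpa using this⟩
    le_sup_left := fun a b => (le_sup_left : a.1 ≤ a.1 ⊔ b.1)
    le_sup_right := fun a b => (le_sup_right : b.1 ≤ a.1 ⊔ b.1)
    sup_le := fun a b c h₁ h₂ => (sup_le h₁ h₂ : a.1 ⊔ b.1 ≤ c.1)
    inf_le_left := fun a b => (inf_le_left : a.1 ⊓ b.1 ≤ a.1)
    inf_le_right := fun a b => (inf_le_right : a.1 ⊓ b.1 ≤ b.1)
    le_inf := fun a b c h₁ h₂ => (le_inf h₁ h₂ : a.1 ≤ b.1 ⊓ c.1) }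

instance : Lattice LinfSub :=
  { (inferInstance : PartialOrder LinfSub) with
    sup := fun x y => ⟨x.1 ⊔ y.1, by
      obtain ⟨C, hC⟩ := x.2; obtain ⟨D, hD⟩ := y.2
      exact ⟨C ⊔ D, fun n => by
        have h1 := hC n; have h2 := hD n
        simp only [Pi.sup_apply]
        rcases le_total (x.1 n) (y.1 n) with h | h
        · rw [sup_eq_right.2 h]; exact h2.trans le_sup_right
        · rw [sup_eq_left.2 h]; exact h1.trans le_sup_left⟩⟩
    inf := fun x y => ⟨x.1 ⊓ y.1, by
      obtain ⟨C, hC⟩ := x.2; obtain ⟨D, hD⟩ := y.2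
      exact ⟨C ⊔ D, fun n => by
        have h1 := hC n; have h2 := hD n
        simp only [Pi.inf_apply]
        rcases le_total (x.1 n) (y.1 n) with h | h
        · rw [inf_eq_left.2 h]; exact h1.trans le_sup_left
        · rw [inf_eq_right.2 h]; exact h2.trans le_sup_right⟩⟩
    le_sup_left := fun a b => (le_sup_left : a.1 ≤ a.1 ⊔ b.1)
    le_sup_right := fun a b => (le_sup_right : b.1 ≤ a.1 ⊔ b.1)
    sup_le := fun a b c h₁ h₂ => (sup_le h₁ h₂ : a.1 ⊔ b.1 ≤ c.1)
    inf_le_left := fun a b => (inf_le_left : a.1 ⊓ b.1 ≤ a.1)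
    inf_le_right := fun a b => (inf_le_right : a.1 ⊓ b.1 ≤ b.1)
    le_inf := fun a b c h₁ h₂ => (le_inf h₁ h₂ : a.1 ≤ b.1 ⊓ c.1) }

noncomputable instance : Norm cSub := ⟨fun x => ⨆ n, |x.1 n|⟩
noncomputable instance : Norm c0Sub := ⟨fun x => ⨆ n, |x.1 n|⟩
noncomputable instance : Norm LinfSub := ⟨fun x => ⨆ n, |x.1 n|⟩

/-! On `c₀` the order is coordinatewise. For a bounded increasing net `(x α)` the coordinatewise
suprema `s` are bounded, so `β * s` is again a null sequence; it is the supremum of the increasing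
net `T (x α)`, and in a lattice-ordered group an increasing net order-converges to its supremum.
Conversely, order convergence in `c₀` forces coordinatewise convergence. Applied to the indicators
of `{0, …, n - 1}`, `T` converges coordinatewise to `β`, which is `T x` only for `x ≡ 1 ∉ c₀`. -/

open Set

theorem Monotone.oConvNet_of_isLUB {ι F : Type*} [Preorder ι] [Nonempty ι]
    [IsDirected ι (· ≤ ·)] [Lattice F] [AddCommGroup F] [IsOrderedAddMonoid F]
    {x : ι → F} {y : F} (hx : Monotone x) (hy : IsLUB (range x) y) : OConvNet x y := by
  have hle : ∀ α, x α ≤ y := fun α => hy.1 ⟨α, rfl⟩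
  refine ⟨range fun α => y - x α, range_nonempty _, ?_, ⟨?_, fun b hb => ?_⟩, ?_⟩
  · rintro _ ⟨α, rfl⟩ _ ⟨α', rfl⟩
    obtain ⟨γ, hαγ, hα'γ⟩ := directed_of (· ≤ ·) α α'
    exact ⟨_, ⟨γ, rfl⟩, sub_le_sub_left (hx hαγ) y, sub_le_sub_left (hx hα'γ) y⟩
  · rintro _ ⟨α, rfl⟩
    exact sub_nonneg.2 (hle α)
  · have : y ≤ y - b := hy.2 <| by
      rintro _ ⟨α, rfl⟩
      exact le_sub_comm.1 (hb ⟨α, rfl⟩)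
    simpa using this
  · rintro _ ⟨α, rfl⟩
    refine ⟨α, fun α' h => ?_⟩
    rw [abs_sub_comm, abs_of_nonneg (sub_nonneg.2 (hle α'))]
    exact sub_le_sub_left (hx h) y

namespace c0Sub

theorem tendsto (a : c0Sub) : Tendsto a.1 atTop (𝓝 0) := a.2

theorem abs_apply_le_norm (a : c0Sub) (k : ℕ) : |a.1 k| ≤ ‖a‖ := by
  have habs : Tendsto (fun m => |a.1 m|) atTop (𝓝 0) := by simpa using (tendsto a).abs
  exact le_ciSup habs.bddAbove_range k

theorem isLUB_of_forall_isLUB_apply {ι : Type*} {x : ι → c0Sub} {y : c0Sub}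
    (h : ∀ k, IsLUB (range fun α => (x α).1 k) (y.1 k)) : IsLUB (range x) y := by
  refine ⟨?_, fun b hb k => (h k).2 ?_⟩
  · rintro _ ⟨α, rfl⟩ k
    exact (h k).1 ⟨α, rfl⟩
  · rintro _ ⟨α, rfl⟩
    exact hb ⟨α, rfl⟩ k

theorem tendsto_apply_of_antitone_of_isGLB {y : ℕ → c0Sub} (hy : Antitone y)
    (hglb : IsGLB (range y) 0) (k : ℕ) : Tendsto (fun m => (y m).1 k) atTop (𝓝 0) := by
  have hnonneg : ∀ m j, 0 ≤ (y m).1 j := fun m j => hglb.1 ⟨m, rfl⟩ j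
  have hbdd : ∀ j, BddBelow (range fun m => (y m).1 j) :=
    fun j => ⟨0, by rintro _ ⟨m, rfl⟩; exact hnonneg m j⟩
  -- the coordinatewise infimum is again a null sequence, hence a lower bound of `y` in `c₀`
  let g : c0Sub := ⟨fun j => ⨅ m, (y m).1 j,
    squeeze_zero (fun j => le_ciInf (hnonneg · j)) (fun j => ciInf_le (hbdd j) 0) (tendsto (y 0))⟩
  have hg : g.1 k = 0 :=
    le_antisymm (hglb.2 (by rintro _ ⟨m, rfl⟩ j; exact ciInf_le (hbdd j) m) k)
      (le_ciInf (hnonneg · k))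
  exact hg ▸ tendsto_atTop_ciInf (fun m m' h => hy h k) (hbdd k)

theorem tendsto_apply_of_oConvSeq {x : ℕ → c0Sub} {x₀ : c0Sub} (h : OConvSeq x x₀) (k : ℕ) :
    Tendsto (fun n => (x n).1 k) atTop (𝓝 (x₀.1 k)) := by
  obtain ⟨y, hy, hglb, hdom⟩ := h
  refine Metric.tendsto_atTop.2 fun ε hε => ?_
  obtain ⟨m, hm⟩ := (Metric.tendsto_atTop.1 (tendsto_apply_of_antitone_of_isGLB hy hglb k)) ε hε
  obtain ⟨n₀, hn₀⟩ := hdom m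
  refine ⟨n₀, fun n hn => ?_⟩
  have hym : |(y m).1 k| < ε := by simpa using hm m le_rfl
  rw [Real.dist_eq]
  exact (hn₀ n hn k).trans_lt ((le_abs_self _).trans_lt hym)

theorem bddAbove_range_apply {ι : Type*} {x : ι → c0Sub} {C : ℝ} (hC : ∀ α, ‖x α‖ ≤ C)
    (k : ℕ) : BddAbove (range fun α => (x α).1 k) :=
  ⟨C, by rintro _ ⟨α, rfl⟩; exact (le_abs_self _).trans ((abs_apply_le_norm _ k).trans (hC α))⟩

theorem abs_iSup_apply_le {ι : Type*} [Nonempty ι] {x : ι → c0Sub} {C : ℝ}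
    (hC : ∀ α, ‖x α‖ ≤ C) (k : ℕ) : |⨆ α, (x α).1 k| ≤ C := by
  have hxk : ∀ α, |(x α).1 k| ≤ C := fun α => (abs_apply_le_norm _ k).trans (hC α)
  obtain ⟨α⟩ := ‹Nonempty ι›
  refine abs_le.2 ⟨(neg_le_of_abs_le (hxk α)).trans (le_ciSup (bddAbove_range_apply hC k) α), ?_⟩
  exact ciSup_le fun α => (le_abs_self _).trans (hxk α)

noncomputable def indicatorIio (n : ℕ) : c0Sub :=
  ⟨(Iio n).indicator 1, tendsto_const_nhds.congr' <| by
    filter_upwards [eventually_ge_atTop n] with k hk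
    simp [hk.not_gt]⟩

theorem indicatorIio_apply (n k : ℕ) : (indicatorIio n).1 k = if k < n then 1 else 0 := by
  simp [indicatorIio, indicator_apply]

theorem monotone_indicatorIio : Monotone indicatorIio := fun _ _ hnm k =>
  indicator_le_indicator_of_subset (Iio_subset_Iio hnm) (fun _ => zero_le_one) k

theorem norm_indicatorIio_le_one (n : ℕ) : ‖indicatorIio n‖ ≤ 1 :=
  ciSup_le fun k => by rw [indicatorIio_apply]; split_ifs <;> norm_num

theorem tendsto_indicatorIio_apply (k : ℕ) :
    Tendsto (fun n => (indicatorIio n).1 k) atTop (𝓝 1) :=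
  tendsto_const_nhds.congr' <| by
    filter_upwards [eventually_gt_atTop k] with n hn
    simp [indicatorIio_apply, hn]

end c0Sub

section Diagonal

variable {β : ℕ → ℝ} {T : c0Sub → c0Sub} (hT : ∀ (a : c0Sub) (k : ℕ), (T a).1 k = β k * a.1 k)
include hT

theorem monotone_of_diagonal (hβ : ∀ k, 0 ≤ β k) : Monotone T := fun a b hab k => by
  simp only [hT]
  exact mul_le_mul_of_nonneg_left (hab k) (hβ k)

theorem exists_isLUB_range_diagonal (hβ : ∀ k, 0 ≤ β k) (hβ0 : Tendsto β atTop (𝓝 0))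
    {ι : Type*} [Nonempty ι] {x : ι → c0Sub} {C : ℝ} (hC : ∀ α, ‖x α‖ ≤ C) :
    ∃ y, IsLUB (range fun α => T (x α)) y := by
  have hs : Tendsto (fun k => β k * ⨆ α, (x α).1 k) atTop (𝓝 0) :=
    hβ0.zero_mul_isBoundedUnder_le (isBoundedUnder_of ⟨C, c0Sub.abs_iSup_apply_le hC⟩)
  refine ⟨⟨_, hs⟩, c0Sub.isLUB_of_forall_isLUB_apply fun k => ?_⟩
  show IsLUB _ (β k * ⨆ α, (x α).1 k)
  have hrange : (range fun α => (T (x α)).1 k) = (β k * ·) '' range fun α => (x α).1 k := by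
    simp only [hT, ← range_comp, Function.comp_def]
  rw [hrange]
  exact (isLUB_ciSup (c0Sub.bddAbove_range_apply hC k)).mul_left (hβ k)

theorem isCqLeviMap_of_diagonal (hβ : ∀ k, 0 ≤ β k) (hβ0 : Tendsto β atTop (𝓝 0)) :
    IsCqLeviMap T := by
  intro ι _ _ _ x hx ⟨C, hC⟩
  obtain ⟨y, hy⟩ := exists_isLUB_range_diagonal hT hβ hβ0 hC
  exact ⟨y, ((monotone_of_diagonal hT hβ).comp hx).oConvNet_of_isLUB hy⟩

theorem not_isSigmaLeviMap_of_diagonal (hβ : ∀ k, β k ≠ 0) : ¬ IsSigmaLeviMap T := by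
  intro hσ
  obtain ⟨x₀, hx₀⟩ := hσ _ c0Sub.monotone_indicatorIio ⟨1, c0Sub.norm_indicatorIio_le_one⟩
  have hx₀_one : ∀ k, x₀.1 k = 1 := fun k => by
    have hlim := c0Sub.tendsto_apply_of_oConvSeq hx₀ k
    simp only [hT] at hlim
    have := tendsto_nhds_unique hlim ((c0Sub.tendsto_indicatorIio_apply k).const_mul (β k))
    exact mul_left_cancel₀ (hβ k) this
  exact one_ne_zero <| tendsto_nhds_unique tendsto_const_nhds <| (c0Sub.tendsto x₀).congr hx₀_one

end Diagonal

/-- for a strictly positive null sequence `β`, the diagonal operator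
`T : c₀ → c₀`, `T a = ∑ β k * a k • e k`, is completely quasi Levi but not σ-Levi. -/
theorem diagonal_c0_c0_cqLevi_not_sigmaLevi (β : ℕ → ℝ)
    (hβpos : ∀ k, 0 < β k) (hβ0 : Tendsto β atTop (nhds 0))
    (T : c0Sub → c0Sub) (hT : ∀ (a : c0Sub) (k : ℕ), (T a).1 k = β k * a.1 k) :
    IsCqLeviMap T ∧ ¬ IsSigmaLeviMap T :=
  ⟨isCqLeviMap_of_diagonal hT (fun k => (hβpos k).le) hβ0,
    not_isSigmaLeviMap_of_diagonal hT fun k => (hβpos k).ne'⟩
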